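/- Let X_α, X_β ∈ F and f ∈ G_κ. Then J(X_α∘f, X_β) ≤ C J(X_α, X_β) for a constant C ≥ 1 depending only on κ, where J(X_α, X_β) = inf_{f₁,f₂∈G}(‖X_α∘f₁ - X_β‖_E + ‖X_α - X_β∘f₂‖_E). -/

import Mathlib

open MeasureTheory

/-- A triple of Lagrangian coordinates. -/
structure LagCoord where
  y : ℝ → ℝ
  U : ℝ → ℝ
  H : ℝ → ℝ

/-- `X ∈ F₀`: Lagrangian coordinates in `E = V × H¹ × V` with `y_ξ, H_ξ ≥ 0`,
`y_ξ + H_ξ = 1` and `y_ξ H_ξ = y_ξ² U² + U_ξ²` a.e., `H(-∞) = 0`, and the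
normalization `y + H = id`. -/
def InF0 (X : LagCoord) : Prop :=
  (∃ K : NNReal, LipschitzWith K X.y) ∧ (∃ K : NNReal, LipschitzWith K X.U) ∧
  (∃ K : NNReal, LipschitzWith K X.H) ∧
  (∃ C : ℝ, ∀ x, |X.y x - x| ≤ C) ∧ (∃ C : ℝ, ∀ x, |X.H x| ≤ C) ∧
  MemLp (fun x => deriv X.y x - 1) 2 (volume : Measure ℝ) ∧
  MemLp (deriv X.H) 2 (volume : Measure ℝ) ∧
  MemLp X.U 2 (volume : Measure ℝ) ∧
  MemLp (deriv X.U) 2 (volume : Measure ℝ) ∧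
  (∀ᵐ ξ ∂(volume : Measure ℝ),
    0 ≤ deriv X.y ξ ∧ 0 ≤ deriv X.H ξ ∧ deriv X.y ξ + deriv X.H ξ = 1 ∧
    deriv X.y ξ * deriv X.H ξ =
      (deriv X.y ξ) ^ 2 * (X.U ξ) ^ 2 + (deriv X.U ξ) ^ 2) ∧
  Filter.Tendsto X.H Filter.atBot (nhds 0) ∧
  (∀ ξ, X.y ξ + X.H ξ = ξ)

/-- Relabeling: `X∘f = (y∘f, U∘f, H∘f)`. -/
def comp (X : LagCoord) (f : ℝ → ℝ) : LagCoord :=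
  ⟨X.y ∘ f, X.U ∘ f, X.H ∘ f⟩

/-- `f ∈ G`: the relabeling group. -/
def InG (f : ℝ ≃ₜ ℝ) : Prop :=
  ((∃ C : ℝ, ∀ x, |f x - x| ≤ C) ∧ ∃ K : NNReal, LipschitzWith K (fun x => f x - x)) ∧
  ((∃ C : ℝ, ∀ x, |f.symm x - x| ≤ C) ∧
    ∃ K : NNReal, LipschitzWith K (fun x => f.symm x - x)) ∧
  MemLp (fun x => deriv (⇑f) x - 1) 2 (volume : Measure ℝ)

/-- The `L^∞` norm of the difference of two Lagrangian triples:
`‖X_α - X_β‖_{L^∞} = ‖y_α - y_β‖_∞ + ‖U_α - U_β‖_∞ + ‖H_α - H_β‖_∞`. -/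
noncomputable def LinfDiff (A B : LagCoord) : ℝ :=
  (⨆ x : ℝ, |A.y x - B.y x|) + (⨆ x : ℝ, |A.U x - B.U x|) +
    (⨆ x : ℝ, |A.H x - B.H x|)

/-- The `V`-norm `‖g‖_V = ‖g‖_{L^∞} + ‖g'‖_{L²}`. -/
noncomputable def Vnorm (g : ℝ → ℝ) : ℝ :=
  (⨆ x : ℝ, |g x|) + (∫ x : ℝ, (deriv g x) ^ 2) ^ (1/2 : ℝ)

/-- The `H¹`-norm. -/
noncomputable def H1norm (g : ℝ → ℝ) : ℝ :=
  (∫ x : ℝ, ((g x) ^ 2 + (deriv g x) ^ 2)) ^ (1/2 : ℝ)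

/-- The `E`-norm of the difference `X_α - X_β` (the `ζ` components differ by
`y_α - y_β`). -/
noncomputable def EDiff (A B : LagCoord) : ℝ :=
  Vnorm (fun x => A.y x - B.y x) + H1norm (fun x => A.U x - B.U x) +
    Vnorm (fun x => A.H x - B.H x)

/-- `J(X_α,X_β) = inf_{f₁,f₂ ∈ G} (‖X_α∘f₁ - X_β‖_E + ‖X_α - X_β∘f₂‖_E)`. -/
noncomputable def Jdist (A B : LagCoord) : ℝ :=
  sInf {r : ℝ | ∃ f₁ f₂ : ℝ ≃ₜ ℝ, InG f₁ ∧ InG f₂ ∧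
    r = EDiff (comp A ⇑f₁) B + EDiff A (comp B ⇑f₂)}

/-- `g ∈ W^{1,∞}(ℝ)` with `‖g‖_{W^{1,∞}} ≤ a`. -/
def W1inftyNormLE (g : ℝ → ℝ) (a : ℝ) : Prop :=
  ∃ b c : ℝ, 0 ≤ b ∧ 0 ≤ c ∧ b + c ≤ a ∧ (∀ x, |g x| ≤ b) ∧
    LipschitzWith c.toNNReal g

/-- `f ∈ G_κ`: `f ∈ G` with
`‖f - id‖_{W^{1,∞}} + ‖f⁻¹ - id‖_{W^{1,∞}} ≤ κ`. -/
def InGkappa (f : ℝ ≃ₜ ℝ) (κ : ℝ) : Prop :=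
  (∃ a b : ℝ, 0 ≤ a ∧ 0 ≤ b ∧ a + b ≤ κ ∧
    W1inftyNormLE (fun x => f x - x) a ∧
    W1inftyNormLE (fun x => f.symm x - x) b) ∧
  MemLp (fun x => deriv (⇑f) x - 1) 2 (volume : Measure ℝ)

/-- `X ∈ F ⊂ E`: each component is Lipschitz (the set `F` lies in
`[W^{1,∞}]³`), `ζ = y - id` and `H` are bounded, and the relevant derivatives
and `U` belong to `L²`. -/
def InE (X : LagCoord) : Prop :=
  (∃ K : NNReal, LipschitzWith K X.y) ∧ (∃ K : NNReal, LipschitzWith K X.U) ∧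
  (∃ K : NNReal, LipschitzWith K X.H) ∧
  (∃ C : ℝ, ∀ x, |X.y x - x| ≤ C) ∧ (∃ C : ℝ, ∀ x, |X.H x| ≤ C) ∧
  MemLp (fun x => deriv X.y x - 1) 2 (volume : Measure ℝ) ∧
  MemLp (deriv X.H) 2 (volume : Measure ℝ) ∧
  MemLp X.U 2 (volume : Measure ℝ) ∧
  MemLp (deriv X.U) 2 (volume : Measure ℝ)

/-! Given `f₁, f₂ ∈ G`, the relabelings `f⁻¹ ∘ f₁` and `f₂ ∘ f` are admissible in the infimum
defining `J(X_α ∘ f, X_β)`: the first term becomes `‖X_α ∘ f₁ - X_β‖_E` and the second is the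
`E`-norm of `(X_α - X_β ∘ f₂) ∘ f`. Composition with an `L`-bi-Lipschitz homeomorphism keeps sup
norms and multiplies the integrals of `g²` and `g'²` by at most `L` and `L³` (change of variables
and the a.e. chain rule). As `L ≥ 1`, that second term is at most `L^{3/2} ‖X_α - X_β ∘ f₂‖_E`,
where `L = κ + 1` for `f ∈ G_κ`. -/

open scoped ENNReal NNReal

theorem integral_le_mul_of_lintegral_le {α : Type*} [MeasurableSpace α] {μ : Measure α}
    {φ ψ : α → ℝ} (hφ : 0 ≤ φ) (hψ : 0 ≤ ψ) (hφm : AEStronglyMeasurable φ μ)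
    (hψm : AEStronglyMeasurable ψ μ) {M M' : ℝ≥0}
    (h : ∫⁻ x, ENNReal.ofReal (φ x) ∂μ ≤ M * ∫⁻ x, ENNReal.ofReal (ψ x) ∂μ)
    (h' : ∫⁻ x, ENNReal.ofReal (ψ x) ∂μ ≤ M' * ∫⁻ x, ENNReal.ofReal (φ x) ∂μ) :
    ∫ x, φ x ∂μ ≤ M * ∫ x, ψ x ∂μ := by
  rw [integral_eq_lintegral_of_nonneg_ae (.of_forall hφ) hφm,
    integral_eq_lintegral_of_nonneg_ae (.of_forall hψ) hψm]
  rcases eq_or_ne (∫⁻ x, ENNReal.ofReal (ψ x) ∂μ) ⊤ with hψ | hψ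
  · -- both Bochner integrals are then the junk value `0`
    have hφ : ∫⁻ x, ENNReal.ofReal (φ x) ∂μ = ⊤ := by
      rw [hψ, top_le_iff, ENNReal.mul_eq_top] at h'
      exact (h'.resolve_right fun h => ENNReal.coe_ne_top h.1).2
    simp [hψ, hφ]
  · simpa [ENNReal.toReal_mul] using
      ENNReal.toReal_mono (ENNReal.mul_ne_top ENNReal.coe_ne_top hψ) h

theorem rpow_half_le_of_le_mul {a b M : ℝ} (ha : 0 ≤ a) (hb : 0 ≤ b) (hM : 0 ≤ M)
    (h : a ≤ M * b) : a ^ (1 / 2 : ℝ) ≤ M ^ (1 / 2 : ℝ) * b ^ (1 / 2 : ℝ) := by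
  rw [← Real.mul_rpow hM hb]
  exact Real.rpow_le_rpow ha h (by norm_num)

theorem one_le_rpow_half_pow_three {L : ℝ} (hL : 1 ≤ L) : 1 ≤ (L ^ 3) ^ (1 / 2 : ℝ) :=
  Real.one_le_rpow (one_le_pow₀ hL) (by norm_num)

theorem lipschitzWith_of_lipschitzWith_sub_id {φ : ℝ → ℝ} {K : ℝ≥0}
    (h : LipschitzWith K fun x => φ x - x) : LipschitzWith (K + 1) φ := by
  simpa using h.add LipschitzWith.id

theorem Vnorm_nonneg (g : ℝ → ℝ) : 0 ≤ Vnorm g :=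
  add_nonneg (Real.iSup_nonneg fun _ => abs_nonneg _)
    (Real.rpow_nonneg (integral_nonneg fun _ => sq_nonneg _) _)

theorem H1norm_nonneg (g : ℝ → ℝ) : 0 ≤ H1norm g :=
  Real.rpow_nonneg (integral_nonneg fun _ => by positivity) _

theorem EDiff_nonneg (A B : LagCoord) : 0 ≤ EDiff A B :=
  add_nonneg (add_nonneg (Vnorm_nonneg _) (H1norm_nonneg _)) (Vnorm_nonneg _)

theorem comp_comp (X : LagCoord) (f g : ℝ → ℝ) : comp (comp X f) g = comp X (f ∘ g) := rfl

section BiLipschitz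

variable {L : ℝ≥0} (e : ℝ ≃ₜ ℝ)

theorem map_volume_le_smul_of_lipschitzWith_symm (he' : LipschitzWith L e.symm) :
    Measure.map e volume ≤ (L : ℝ≥0∞) • volume := by
  refine Measure.le_intro fun s hs _ => ?_
  rw [Measure.map_apply e.measurable hs, ← e.image_symm]
  simpa [hausdorffMeasure_real] using he'.hausdorffMeasure_image_le zero_le_one s

theorem quasiMeasurePreserving_of_lipschitzWith_symm (he' : LipschitzWith L e.symm) :
    Measure.QuasiMeasurePreserving e volume volume :=
  ⟨e.measurable, Measure.absolutelyContinuous_of_le_smul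
    (map_volume_le_smul_of_lipschitzWith_symm e he')⟩

theorem lintegral_comp_le_of_lipschitzWith_symm (he' : LipschitzWith L e.symm)
    (h : ℝ → ℝ≥0∞) : ∫⁻ x, h (e x) ≤ L * ∫⁻ x, h x :=
  calc ∫⁻ x, h (e x) = ∫⁻ x, h x ∂(Measure.map e volume) :=
        (lintegral_map_equiv h e.toMeasurableEquiv).symm
    _ ≤ ∫⁻ x, h x ∂((L : ℝ≥0∞) • volume) :=
        lintegral_mono' (map_volume_le_smul_of_lipschitzWith_symm e he') le_rfl
    _ = L * ∫⁻ x, h x := lintegral_smul_measure _ _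

theorem MeasureTheory.MemLp.comp_of_lipschitzWith_symm {E : Type*} [NormedAddCommGroup E] {p : ℝ≥0∞}
    {g : ℝ → E} (hg : MemLp g p) (he' : LipschitzWith L e.symm) : MemLp (g ∘ e) p :=
  (hg.of_measure_le_smul ENNReal.coe_ne_top
    (map_volume_le_smul_of_lipschitzWith_symm e he')).comp_of_map e.measurable.aemeasurable

theorem one_le_of_lipschitzWith (he : LipschitzWith L e) (he' : LipschitzWith L e.symm) :
    1 ≤ L := by
  have h1 := he'.dist_le_mul (e 0) (e 1)
  have h2 := he.dist_le_mul 0 1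
  simp only [Homeomorph.symm_apply_apply, dist_comm (0 : ℝ), Real.dist_0_eq_abs, abs_one,
    mul_one] at h1 h2
  have h : (1 : ℝ) ≤ L * L := h1.trans (by gcongr)
  have hL : (1 : ℝ) ≤ L := by nlinarith [L.coe_nonneg]
  exact_mod_cast hL

/-- At a point where `e` and `e.symm` are differentiable, `g ∘ e` is differentiable exactly when
`g` is, so the chain rule holds there for every `g`, both sides being `0` otherwise. -/
theorem ae_deriv_comp (he : LipschitzWith L e) (he' : LipschitzWith L e.symm) (g : ℝ → ℝ) :
    ∀ᵐ x, deriv (g ∘ e) x = deriv g (e x) * deriv e x := by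
  filter_upwards [he.ae_differentiableAt,
    (quasiMeasurePreserving_of_lipschitzWith_symm e he').ae he'.ae_differentiableAt]
    with x hex hsx
  by_cases hg : DifferentiableAt ℝ g (e x)
  · exact deriv_comp x hg hex
  · have hge : ¬DifferentiableAt ℝ (g ∘ e) x := fun h => hg <| by
      rw [← e.symm_apply_apply x] at h
      simpa [Function.comp_def] using h.comp (e x) hsx
    rw [deriv_zero_of_not_differentiableAt hge, deriv_zero_of_not_differentiableAt hg, zero_mul]

theorem memLp_deriv_symm_sub_one (he : LipschitzWith L e) (he' : LipschitzWith L e.symm)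
    (h : MemLp (fun x => deriv e x - 1) 2) : MemLp (fun y => deriv e.symm y - 1) 2 := by
  have hback : LipschitzWith L e.symm.symm := by rwa [e.symm_symm]
  refine ((h.comp_of_lipschitzWith_symm e.symm hback).const_mul L).of_le
    ((measurable_deriv _).sub_const 1).aestronglyMeasurable ?_
  filter_upwards [ae_deriv_comp e.symm he' hback e] with y hy
  rw [e.self_comp_symm, deriv_id] at hy
  have hb : |deriv e.symm y| ≤ L := norm_deriv_le_of_lipschitz he'
  have hfac : deriv e.symm y - 1 = deriv e.symm y * -(deriv e (e.symm y) - 1) := by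
    linear_combination -hy
  simp only [Function.comp_apply, Real.norm_eq_abs, abs_mul, NNReal.abs_eq, hfac, abs_neg]
  gcongr

theorem memLp_deriv_comp_sub_one (he : LipschitzWith L e) (he' : LipschitzWith L e.symm)
    {g : ℝ → ℝ} (he1 : MemLp (fun x => deriv e x - 1) 2) (hg1 : MemLp (fun x => deriv g x - 1) 2) :
    MemLp (fun x => deriv (g ∘ e) x - 1) 2 := by
  refine (((hg1.comp_of_lipschitzWith_symm e he').norm.const_mul L).add he1.norm).of_le
    ((measurable_deriv _).sub_const 1).aestronglyMeasurable ?_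
  filter_upwards [ae_deriv_comp e he he' g] with x hx
  have hb : |deriv e x| ≤ L := norm_deriv_le_of_lipschitz he
  rw [hx]
  calc ‖deriv g (e x) * deriv e x - 1‖
      = |(deriv g (e x) - 1) * deriv e x + (deriv e x - 1)| := by rw [Real.norm_eq_abs]; ring_nf
    _ ≤ L * |deriv g (e x) - 1| + |deriv e x - 1| := by
        grw [abs_add_le, abs_mul, mul_comm, hb]
    _ ≤ ‖L * ‖deriv g (e x) - 1‖ + ‖deriv e x - 1‖‖ := by
        simpa only [Real.norm_eq_abs] using le_abs_self _

theorem lintegral_deriv_comp_sq_le (he : LipschitzWith L e) (he' : LipschitzWith L e.symm)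
    (g : ℝ → ℝ) :
    ∫⁻ x, ENNReal.ofReal (deriv (g ∘ e) x ^ 2) ≤
      L ^ 3 * ∫⁻ x, ENNReal.ofReal (deriv g x ^ 2) := by
  have hpt : ∀ᵐ x, ENNReal.ofReal (deriv (g ∘ e) x ^ 2) ≤
      L ^ 2 * ENNReal.ofReal (deriv g (e x) ^ 2) := by
    filter_upwards [ae_deriv_comp e he he' g] with x hx
    have hd : deriv e x ^ 2 ≤ (L : ℝ) ^ 2 := by
      simpa only [Real.norm_eq_abs, sq_abs] using
        pow_le_pow_left₀ (norm_nonneg _) (norm_deriv_le_of_lipschitz he (x₀ := x)) 2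
    rw [hx, ← ENNReal.ofReal_coe_nnreal, ← ENNReal.ofReal_pow L.coe_nonneg,
      ← ENNReal.ofReal_mul (by positivity)]
    exact ENNReal.ofReal_le_ofReal (by nlinarith [sq_nonneg (deriv g (e x))])
  calc ∫⁻ x, ENNReal.ofReal (deriv (g ∘ e) x ^ 2)
      ≤ ∫⁻ x, L ^ 2 * ENNReal.ofReal (deriv g (e x) ^ 2) := lintegral_mono_ae hpt
    _ = L ^ 2 * ∫⁻ x, ENNReal.ofReal (deriv g (e x) ^ 2) :=
        lintegral_const_mul' _ _ (by simp)
    _ ≤ L ^ 2 * (L * ∫⁻ x, ENNReal.ofReal (deriv g x ^ 2)) := by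
        gcongr
        exact lintegral_comp_le_of_lipschitzWith_symm e he' fun y => ENNReal.ofReal (deriv g y ^ 2)
    _ = L ^ 3 * ∫⁻ x, ENNReal.ofReal (deriv g x ^ 2) := by ring

theorem lintegral_sq_add_deriv_sq_comp_le (he : LipschitzWith L e)
    (he' : LipschitzWith L e.symm) {g : ℝ → ℝ} (hg : Measurable g) :
    ∫⁻ x, ENNReal.ofReal ((g ∘ e) x ^ 2 + deriv (g ∘ e) x ^ 2) ≤
      L ^ 3 * ∫⁻ x, ENNReal.ofReal (g x ^ 2 + deriv g x ^ 2) := by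
  have hL : (L : ℝ≥0∞) ≤ L ^ 3 :=
    le_self_pow₀ (by exact_mod_cast one_le_of_lipschitzWith e he he') (by norm_num)
  have hadd (a b : ℝ) :
      ENNReal.ofReal (a ^ 2 + b ^ 2) = ENNReal.ofReal (a ^ 2) + ENNReal.ofReal (b ^ 2) :=
    ENNReal.ofReal_add (sq_nonneg a) (sq_nonneg b)
  simp only [hadd]
  rw [lintegral_add_left ((hg.comp e.measurable).pow_const 2).ennreal_ofReal,
    lintegral_add_left (hg.pow_const 2).ennreal_ofReal, mul_add]
  gcongr ?_ + ?_
  · calc ∫⁻ x, ENNReal.ofReal ((g ∘ e) x ^ 2)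
        ≤ L * ∫⁻ x, ENNReal.ofReal (g x ^ 2) :=
          lintegral_comp_le_of_lipschitzWith_symm e he' fun y => ENNReal.ofReal (g y ^ 2)
      _ ≤ L ^ 3 * ∫⁻ x, ENNReal.ofReal (g x ^ 2) := by gcongr
  · exact lintegral_deriv_comp_sq_le e he he' g

theorem Vnorm_comp_le (he : LipschitzWith L e) (he' : LipschitzWith L e.symm) (g : ℝ → ℝ) :
    Vnorm (g ∘ e) ≤ ((L : ℝ) ^ 3) ^ (1 / 2 : ℝ) * Vnorm g := by
  have hsup : ⨆ x, |(g ∘ e) x| = ⨆ x, |g x| := e.surjective.iSup_comp fun y => |g y|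
  have hback : LipschitzWith L e.symm.symm := by rwa [e.symm_symm]
  have hint := integral_le_mul_of_lintegral_le (M := L ^ 3) (M' := L ^ 3)
    (fun _ => sq_nonneg _) (fun _ => sq_nonneg _)
    ((measurable_deriv _).pow_const 2).aestronglyMeasurable
    ((measurable_deriv _).pow_const 2).aestronglyMeasurable
    (by simpa using lintegral_deriv_comp_sq_le e he he' g)
    (by simpa [Function.comp_def] using lintegral_deriv_comp_sq_le e.symm he' hback (g ∘ e))
  unfold Vnorm
  rw [hsup, mul_add]
  gcongr
  · exact le_mul_of_one_le_left (Real.iSup_nonneg fun _ => abs_nonneg _)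
      (one_le_rpow_half_pow_three (mod_cast one_le_of_lipschitzWith e he he'))
  · exact rpow_half_le_of_le_mul (integral_nonneg fun _ => sq_nonneg _)
      (integral_nonneg fun _ => sq_nonneg _) (by positivity) (by exact_mod_cast hint)

theorem H1norm_comp_le (he : LipschitzWith L e) (he' : LipschitzWith L e.symm) {g : ℝ → ℝ}
    (hg : Measurable g) : H1norm (g ∘ e) ≤ ((L : ℝ) ^ 3) ^ (1 / 2 : ℝ) * H1norm g := by
  have hback : LipschitzWith L e.symm.symm := by rwa [e.symm_symm]
  have hmeas {h : ℝ → ℝ} (hh : Measurable h) :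
      AEStronglyMeasurable (fun x => h x ^ 2 + deriv h x ^ 2) :=
    ((hh.pow_const 2).add ((measurable_deriv _).pow_const 2)).aestronglyMeasurable
  have hint := integral_le_mul_of_lintegral_le (M := L ^ 3) (M' := L ^ 3)
    (fun _ => by positivity) (fun _ => by positivity) (hmeas (hg.comp e.measurable)) (hmeas hg)
    (by simpa using lintegral_sq_add_deriv_sq_comp_le e he he' hg)
    (by simpa [Function.comp_def] using
      lintegral_sq_add_deriv_sq_comp_le e.symm he' hback (hg.comp e.measurable))
  exact rpow_half_le_of_le_mul (integral_nonneg fun _ => by positivity)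
    (integral_nonneg fun _ => by positivity) (by positivity) (by exact_mod_cast hint)

theorem EDiff_comp_le (he : LipschitzWith L e) (he' : LipschitzWith L e.symm) (A B : LagCoord)
    (hU : Measurable fun x => A.U x - B.U x) :
    EDiff (comp A e) (comp B e) ≤ ((L : ℝ) ^ 3) ^ (1 / 2 : ℝ) * EDiff A B := by
  rw [EDiff, EDiff, mul_add, mul_add]
  exact add_le_add
    (add_le_add (Vnorm_comp_le e he he' fun x => A.y x - B.y x) (H1norm_comp_le e he he' hU))
    (Vnorm_comp_le e he he' fun x => A.H x - B.H x)

end BiLipschitz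

/-- `InG f` unfolds to `IsNearId f ∧ IsNearId f.symm ∧ MemLp (f' - 1) 2`. -/
def IsNearId (φ : ℝ → ℝ) : Prop :=
  (∃ C : ℝ, ∀ x, |φ x - x| ≤ C) ∧ ∃ K : ℝ≥0, LipschitzWith K fun x => φ x - x

namespace IsNearId

theorem id : IsNearId id :=
  ⟨⟨0, by simp⟩, 0, by simp⟩

theorem exists_lipschitzWith {φ : ℝ → ℝ} (h : IsNearId φ) : ∃ K : ℝ≥0, LipschitzWith K φ :=
  let ⟨_, K, hK⟩ := h
  ⟨K + 1, lipschitzWith_of_lipschitzWith_sub_id hK⟩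

theorem comp {φ ψ : ℝ → ℝ} (hφ : IsNearId φ) (hψ : IsNearId ψ) : IsNearId (φ ∘ ψ) := by
  obtain ⟨Lψ, hLψ⟩ := hψ.exists_lipschitzWith
  obtain ⟨⟨Cφ, hCφ⟩, Kφ, hKφ⟩ := hφ
  obtain ⟨⟨Cψ, hCψ⟩, Kψ, hKψ⟩ := hψ
  refine ⟨⟨Cφ + Cψ, fun x => ?_⟩, Kφ * Lψ + Kψ, by simpa using (hKφ.comp hLψ).add hKψ⟩
  calc |φ (ψ x) - x| = |(φ (ψ x) - ψ x) + (ψ x - x)| := by ring_nf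
    _ ≤ Cφ + Cψ := (abs_add_le _ _).trans (add_le_add (hCφ _) (hCψ x))

end IsNearId

namespace InG

theorem refl : InG (Homeomorph.refl ℝ) :=
  ⟨IsNearId.id, IsNearId.id, by simp⟩

theorem exists_lipschitzWith {f : ℝ ≃ₜ ℝ} (hf : InG f) :
    ∃ L : ℝ≥0, LipschitzWith L f ∧ LipschitzWith L f.symm := by
  obtain ⟨K, hK⟩ := IsNearId.exists_lipschitzWith hf.1
  obtain ⟨K', hK'⟩ := IsNearId.exists_lipschitzWith hf.2.1
  exact ⟨max K K', hK.weaken (le_max_left _ _), hK'.weaken (le_max_right _ _)⟩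

protected theorem symm {f : ℝ ≃ₜ ℝ} (hf : InG f) : InG f.symm := by
  obtain ⟨L, hL, hL'⟩ := hf.exists_lipschitzWith
  exact ⟨hf.2.1, by rw [f.symm_symm]; exact hf.1, memLp_deriv_symm_sub_one f hL hL' hf.2.2⟩

protected theorem trans {f g : ℝ ≃ₜ ℝ} (hf : InG f) (hg : InG g) : InG (f.trans g) := by
  obtain ⟨L, hL, hL'⟩ := hf.exists_lipschitzWith
  have hnear : IsNearId (g ∘ f) := IsNearId.comp hg.1 hf.1
  have hnear' : IsNearId (f.symm ∘ g.symm) := IsNearId.comp hf.2.1 hg.2.1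
  exact ⟨hnear, hnear', memLp_deriv_comp_sub_one f hL hL' hf.2.2 hg.2.2⟩

end InG

namespace W1inftyNormLE

variable {g : ℝ → ℝ} {a : ℝ}

theorem mono (h : W1inftyNormLE g a) {a' : ℝ} (ha : a ≤ a') : W1inftyNormLE g a' :=
  let ⟨b, c, hb, hc, hbc, hgb, hgc⟩ := h
  ⟨b, c, hb, hc, hbc.trans ha, hgb, hgc⟩

theorem lipschitzWith (h : W1inftyNormLE g a) : LipschitzWith a.toNNReal g :=
  let ⟨_, _, hb, _, hbc, _, hgc⟩ := h
  hgc.weaken (Real.toNNReal_le_toNNReal (by linarith))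

theorem isNearId {φ : ℝ → ℝ} (h : W1inftyNormLE (fun x => φ x - x) a) : IsNearId φ :=
  let ⟨b, _, _, _, _, hb, hc⟩ := h
  ⟨⟨b, hb⟩, _, hc⟩

end W1inftyNormLE

namespace InGkappa

variable {f : ℝ ≃ₜ ℝ} {κ : ℝ}

theorem inG (hf : InGkappa f κ) : InG f :=
  let ⟨⟨_, _, _, _, _, hfa, hfb⟩, hf'⟩ := hf
  ⟨hfa.isNearId, hfb.isNearId, hf'⟩

theorem lipschitzWith (hf : InGkappa f κ) :
    LipschitzWith (κ.toNNReal + 1) f ∧ LipschitzWith (κ.toNNReal + 1) f.symm :=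
  let ⟨⟨_, _, ha, hb, hab, hfa, hfb⟩, _⟩ := hf
  ⟨lipschitzWith_of_lipschitzWith_sub_id (hfa.mono (by linarith)).lipschitzWith,
    lipschitzWith_of_lipschitzWith_sub_id (hfb.mono (by linarith)).lipschitzWith⟩

end InGkappa

section Jdist

variable {A B : LagCoord}

theorem Jdist_le {f₁ f₂ : ℝ ≃ₜ ℝ} (h₁ : InG f₁) (h₂ : InG f₂) :
    Jdist A B ≤ EDiff (comp A f₁) B + EDiff A (comp B f₂) :=
  csInf_le ⟨0, by
    rintro _ ⟨f₁, f₂, -, -, rfl⟩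
    exact add_nonneg (EDiff_nonneg _ _) (EDiff_nonneg _ _)⟩ ⟨f₁, f₂, h₁, h₂, rfl⟩

theorem le_Jdist {c : ℝ}
    (h : ∀ f₁ f₂ : ℝ ≃ₜ ℝ, InG f₁ → InG f₂ → c ≤ EDiff (comp A f₁) B + EDiff A (comp B f₂)) :
    c ≤ Jdist A B :=
  le_csInf ⟨_, _, _, InG.refl, InG.refl, rfl⟩ fun _ ⟨f₁, f₂, h₁, h₂, hr⟩ => hr ▸ h f₁ f₂ h₁ h₂

end Jdist

theorem stmt19_general (κ : ℝ) :
    ∃ C : ℝ, 1 ≤ C ∧ ∀ (A B : LagCoord) (f : ℝ ≃ₜ ℝ),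
      InE A → InE B → InGkappa f κ →
      Jdist (comp A ⇑f) B ≤ C * Jdist A B := by
  set L : ℝ≥0 := κ.toNNReal + 1
  set C : ℝ := ((L : ℝ) ^ 3) ^ (1 / 2 : ℝ)
  have hC : 1 ≤ C := one_le_rpow_half_pow_three (by simp [L])
  refine ⟨C, hC, fun A B f hA hB hf => ?_⟩
  obtain ⟨hL, hL'⟩ := hf.lipschitzWith
  obtain ⟨-, ⟨_, hAU⟩, -⟩ := hA
  obtain ⟨-, ⟨_, hBU⟩, -⟩ := hB
  rw [← div_le_iff₀' (by positivity)]
  refine le_Jdist fun f₁ f₂ h₁ h₂ => ?_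
  rw [div_le_iff₀' (by positivity)]
  have hU : Measurable fun x => A.U x - (comp B f₂).U x :=
    (hAU.continuous.sub (hBU.continuous.comp f₂.continuous)).measurable
  calc Jdist (comp A f) B
      ≤ EDiff (comp (comp A f) (f₁.trans f.symm)) B + EDiff (comp A f) (comp B (f.trans f₂)) :=
        Jdist_le (h₁.trans hf.inG.symm) (hf.inG.trans h₂)
    _ = EDiff (comp A f₁) B + EDiff (comp A f) (comp (comp B f₂) f) := by
        have hf₁ : ⇑f ∘ ⇑(f₁.trans f.symm) = f₁ := by ext; simp
        rw [comp_comp, hf₁]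
        rfl
    _ ≤ EDiff (comp A f₁) B + C * EDiff A (comp B f₂) := by
        grw [EDiff_comp_le f hL hL' A _ hU]
    _ ≤ C * (EDiff (comp A f₁) B + EDiff A (comp B f₂)) := by
        rw [mul_add]
        gcongr
        exact le_mul_of_one_le_left (EDiff_nonneg _ _) hC

/-- For `X_α, X_β ∈ F` and `f ∈ G_κ` one has
`J(X_α∘f, X_β) ≤ C J(X_α, X_β)` for a constant `C ≥ 1` depending only on
`κ`. -/
theorem stmt19 (κ : ℝ) (hκ : 0 ≤ κ) :
    ∃ C : ℝ, 1 ≤ C ∧ ∀ (A B : LagCoord) (f : ℝ ≃ₜ ℝ),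
      InE A → InE B → InGkappa f κ →
      Jdist (comp A ⇑f) B ≤ C * Jdist A B :=
  stmt19_general κ
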